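/- arXiv:2508.06317 — 2 statements merged into one kernel-verified Lean document; each statement's English description precedes it below -/
import Mathlib

section
/- Let M > 0 and let ρ be a probability measure on ℝ giving full mass to the set {x : |x| ≤ √M}. Then for every δ > 0 and every η > 0 there exist ε₀ > 0 and G₀ ∈ ℕ such that: for every probability measure π on ℝ giving full mass to {x : |x| ≤ √M} with KL(π‖ρ) ≤ ε₀, and every integer G ≥ G₀, if τ₁, …, τ_G are independent random variables each with law π, then the probability that |σ̂_G − Std(ρ)| > δ is less than η, where σ̂_G = √((1/G)·Σ_{i=1}^{G}(τᵢ − τ̄_G)²) and τ̄_G = (1/G)·Σ_{i=1}^{G} τᵢ. (Rollout standard deviation is a consistent estimator of the Bayesian predictive standard deviation as the number of rollouts G → ∞ and the KL divergence ε → 0.) -/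
open MeasureTheory ProbabilityTheory

open scoped Classical

/-- Kullback–Leibler divergence `KL(μ‖ν)`, valued in `EReal`:
`∫ log (dμ/dν) dμ` when `μ ≪ ν` and the integrand is `μ`-integrable, `⊤` otherwise. -/
noncomputable def klDiv {Ω : Type*} [MeasurableSpace Ω] (μ ν : Measure Ω) : EReal :=
  if μ ≪ ν ∧ Integrable (fun ω => Real.log (μ.rnDeriv ν ω).toReal) μ
  then ((∫ ω, Real.log (μ.rnDeriv ν ω).toReal ∂μ : ℝ) : EReal)
  else ⊤

/-- Standard deviation of a measure on `ℝ`: `√(∫ x² dμ − (∫ x dμ)²)`. -/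
noncomputable def stdM (μ : Measure ℝ) : ℝ :=
  Real.sqrt ((∫ x, x ^ 2 ∂μ) - (∫ x, x ∂μ) ^ 2)

lemma young (g s : ℝ) (hg : 0 ≤ g) : s * g ≤ g * Real.log g - g + Real.exp s := by
  rcases eq_or_lt_of_le hg with h | h
  · simp [← h]; positivity
  · have h1 := Real.add_one_le_exp (s - Real.log g)
    have h2 : Real.exp (s - Real.log g) = Real.exp s / g := by
      rw [Real.exp_sub, Real.exp_log h]
    rw [h2] at h1
    have h3 := mul_le_mul_of_nonneg_right h1 hg
    rw [div_mul_cancel₀ _ h.ne'] at h3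
    nlinarith

lemma expquad (s : ℝ) (hs : |s| ≤ 1) : Real.exp s ≤ 1 + s + s ^ 2 := by
  have h := Real.exp_bound hs (by norm_num : 0 < 2)
  have h2 : ∑ i ∈ Finset.range 2, s ^ i / (Nat.factorial i : ℝ) = 1 + s := by
    simp [Finset.sum_range_succ]
  rw [h2] at h
  have h' := abs_le.mp h
  norm_num [Nat.factorial] at h'
  nlinarith [sq_abs s, sq_nonneg s, h'.2]

lemma sqrt_dist (a b : ℝ) : |Real.sqrt a - Real.sqrt b| ≤ Real.sqrt |a - b| := by
  wlog hab : b ≤ a generalizing a b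
  · rw [abs_sub_comm, abs_sub_comm a b]; exact this _ _ (le_of_not_ge hab)
  rw [abs_of_nonneg (sub_nonneg.mpr (Real.sqrt_le_sqrt hab)), abs_of_nonneg (sub_nonneg.mpr hab)]
  rw [sub_le_iff_le_add]
  rcases le_or_gt a 0 with ha | ha
  · have : Real.sqrt a = 0 := Real.sqrt_eq_zero'.mpr ha
    rw [this]; positivity
  rcases le_or_gt b 0 with hb | hb
  · have : Real.sqrt b = 0 := Real.sqrt_eq_zero'.mpr hb
    rw [this, add_zero]
    exact Real.sqrt_le_sqrt (by linarith)
  · rw [← Real.sqrt_sq (by positivity : (0:ℝ) ≤ Real.sqrt (a-b) + Real.sqrt b)]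
    apply Real.sqrt_le_sqrt
    have h1 : Real.sqrt (a-b) ^ 2 = a - b := Real.sq_sqrt (by linarith)
    have h2 : Real.sqrt b ^ 2 = b := Real.sq_sqrt hb.le
    nlinarith [Real.sqrt_nonneg (a-b), Real.sqrt_nonneg b]

lemma moment_bound (π ρ : Measure ℝ) [IsProbabilityMeasure π] [IsProbabilityMeasure ρ]
    (hac : π ≪ ρ)
    (hint : Integrable (fun x => Real.log ((π.rnDeriv ρ x)).toReal) π)
    (f : ℝ → ℝ) (hf : Measurable f) (B : ℝ) (hB0 : 0 < B)
    (hB : ∀ᵐ x ∂ρ, |f x| ≤ B) (t : ℝ) (ht : 0 < t) (htB : t * B ≤ 1) :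
    ∫ x, f x ∂π - ∫ x, f x ∂ρ ≤
      (∫ x, Real.log ((π.rnDeriv ρ x)).toReal ∂π) / t + t * B ^ 2 := by
  set g : ℝ → ℝ := fun x => (π.rnDeriv ρ x).toReal with hgdef
  have hg0 : ∀ x, 0 ≤ g x := fun x => ENNReal.toReal_nonneg
  have hBπ : ∀ᵐ x ∂π, |f x| ≤ B := hac.ae_le hB
  have hfρ : Integrable f ρ := ⟨hf.aestronglyMeasurable,
    HasFiniteIntegral.of_bounded (C := B) (by filter_upwards [hB] with x hx; simpa using hx)⟩
  have hfπ : Integrable f π := ⟨hf.aestronglyMeasurable,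
    HasFiniteIntegral.of_bounded (C := B) (by filter_upwards [hBπ] with x hx; simpa using hx)⟩
  have hgf : Integrable (fun x => g x * f x) ρ := by
    have := (integrable_rnDeriv_smul_iff (f := f) hac).mpr hfπ
    simpa [smul_eq_mul, hgdef] using this
  have hglogg : Integrable (fun x => g x * Real.log (g x)) ρ := by
    have := (integrable_rnDeriv_smul_iff
      (f := fun x => Real.log ((π.rnDeriv ρ x)).toReal) hac).mpr hint
    simpa [smul_eq_mul, hgdef] using this
  have hgint : Integrable g ρ := Measure.integrable_toReal_rnDeriv
  have key : ∀ᵐ x ∂ρ, t * (g x * f x) ≤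
      (g x * Real.log (g x) - g x) + ((1 + t ^ 2 * B ^ 2) + t * f x) := by
    filter_upwards [hB] with x hx
    have h1 : (t * f x) * g x ≤ g x * Real.log (g x) - g x + Real.exp (t * f x) :=
      young (g x) (t * f x) (hg0 x)
    have habs : |t * f x| ≤ 1 := by
      rw [abs_mul, abs_of_pos ht]
      calc t * |f x| ≤ t * B := by nlinarith
        _ ≤ 1 := htB
    have h2 : Real.exp (t * f x) ≤ 1 + t * f x + (t * f x) ^ 2 := expquad _ habs
    have h3 : (t * f x) ^ 2 ≤ t ^ 2 * B ^ 2 := by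
      rw [mul_pow]
      have : f x ^ 2 ≤ B ^ 2 := sq_le_sq' (by linarith [abs_le.mp hx]) (abs_le.mp hx).2
      nlinarith [sq_nonneg t]
    nlinarith
  have h1 : Integrable (fun x => g x * Real.log (g x) - g x) ρ := hglogg.sub hgint
  have h2 : Integrable (fun x => (1 + t ^ 2 * B ^ 2) + t * f x) ρ :=
    (integrable_const _).add (hfρ.const_mul t)
  have hRHS : Integrable
      (fun x => (g x * Real.log (g x) - g x) + ((1 + t ^ 2 * B ^ 2) + t * f x)) ρ := h1.add h2
  have hLHS : Integrable (fun x => t * (g x * f x)) ρ := hgf.const_mul t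
  have hmono := integral_mono_ae hLHS hRHS key
  have e1 : ∫ x, t * (g x * f x) ∂ρ = t * ∫ x, f x ∂π := by
    rw [integral_const_mul]
    congr 1
    have := integral_rnDeriv_smul (f := f) hac
    simpa [smul_eq_mul, hgdef] using this
  have e2 : ∫ x, g x * Real.log (g x) ∂ρ = ∫ x, Real.log ((π.rnDeriv ρ x)).toReal ∂π := by
    have := integral_rnDeriv_smul (f := fun x => Real.log ((π.rnDeriv ρ x)).toReal) hac
    simpa [smul_eq_mul, hgdef] using this
  have e3 : ∫ x, g x ∂ρ = 1 := by
    rw [hgdef, Measure.integral_toReal_rnDeriv hac]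
    simp
  rw [e1] at hmono
  rw [integral_add h1 h2, integral_sub hglogg hgint, e2, e3,
      integral_add (integrable_const _) (hfρ.const_mul t),
      integral_const_mul, integral_const] at hmono
  simp only [measure_univ, probReal_univ, ENNReal.toReal_one, smul_eq_mul, one_mul] at hmono
  set K := ∫ x, Real.log ((π.rnDeriv ρ x)).toReal ∂π
  have hKt : K / t * t = K := div_mul_cancel₀ _ ht.ne'
  nlinarith [hKt]

lemma moment_bound_abs (π ρ : Measure ℝ) [IsProbabilityMeasure π] [IsProbabilityMeasure ρ]
    (hac : π ≪ ρ)
    (hint : Integrable (fun x => Real.log ((π.rnDeriv ρ x)).toReal) π)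
    (f : ℝ → ℝ) (hf : Measurable f) (B : ℝ) (hB0 : 0 < B)
    (hB : ∀ᵐ x ∂ρ, |f x| ≤ B) (t : ℝ) (ht : 0 < t) (htB : t * B ≤ 1) :
    |∫ x, f x ∂π - ∫ x, f x ∂ρ| ≤
      (∫ x, Real.log ((π.rnDeriv ρ x)).toReal ∂π) / t + t * B ^ 2 := by
  rw [abs_sub_le_iff]
  refine ⟨moment_bound π ρ hac hint f hf B hB0 hB t ht htB, ?_⟩
  have h := moment_bound π ρ hac hint (fun x => -f x) hf.neg B hB0
    (by filter_upwards [hB] with x hx; simpa using hx) t ht htB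
  simp only [integral_neg] at h
  linarith


lemma empirical_cheb {Ω : Type} [MeasurableSpace Ω] (P : Measure Ω) [IsProbabilityMeasure P]
    {G : ℕ} (hG : 0 < G) (τ : Fin G → Ω → ℝ) (hmeas : ∀ i, Measurable (τ i))
    (hindep : iIndepFun τ P)
    (π : Measure ℝ) [IsProbabilityMeasure π] (hlaw : ∀ i, Measure.map (τ i) P = π)
    (φ : ℝ → ℝ) (hφ : Measurable φ) (C : ℝ) (hC0 : 0 ≤ C) (hCb : ∀ᵐ x ∂π, |φ x| ≤ C)
    (a : ℝ) (ha : 0 < a) :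
    P {ω | a ≤ |(1 / (G : ℝ)) * ∑ i, φ (τ i ω) - ∫ x, φ x ∂π|}
      ≤ ENNReal.ofReal (C ^ 2 / (G * a ^ 2)) := by
  set m := ∫ x, φ x ∂π with hm
  set Y : Fin G → Ω → ℝ := fun i ω => φ (τ i ω) with hY
  have hYmeas : ∀ i, Measurable (Y i) := fun i => hφ.comp (hmeas i)
  have hYb : ∀ i, ∀ᵐ ω ∂P, |Y i ω| ≤ C := by
    intro i
    have h1 : ∀ᵐ x ∂(Measure.map (τ i) P), |φ x| ≤ C := by rw [hlaw i]; exact hCb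
    exact (ae_map_iff (hmeas i).aemeasurable
      (measurableSet_le (hφ.abs) measurable_const)).mp h1
  have hYmem : ∀ i, MemLp (Y i) 2 P := fun i =>
    MemLp.of_bound (hYmeas i).aestronglyMeasurable C
      (by filter_upwards [hYb i] with ω h; simpa using h)
  have hEY : ∀ i, ∫ ω, Y i ω ∂P = m := by
    intro i
    rw [hm, ← hlaw i, integral_map (hmeas i).aemeasurable hφ.aestronglyMeasurable]
  have hvar : ∀ i, variance (Y i) P ≤ C ^ 2 := by
    intro i
    refine (variance_le_expectation_sq (hYmem i).1).trans ?_
    have hint2 : Integrable (Y i ^ 2) P := (hYmem i).integrable_sq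
    have : ∫ ω, (Y i ^ 2) ω ∂P ≤ ∫ _ω, C ^ 2 ∂P := by
      refine integral_mono_ae hint2 (integrable_const _) ?_
      filter_upwards [hYb i] with ω h
      simp only [Pi.pow_apply]
      exact sq_le_sq' (by linarith [abs_le.mp h]) (abs_le.mp h).2
    simpa [measure_univ] using this
  have hYindep : iIndepFun Y P :=
    hindep.comp (fun _ => φ) (fun _ => hφ)
  set S : Ω → ℝ := ∑ i, Y i with hS
  have hSmem : MemLp S 2 P := memLp_finset_sum' _ (fun i _ => hYmem i)
  have hvarS : variance S P ≤ G * C ^ 2 := by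
    rw [hS, IndepFun.variance_sum (fun i _ => hYmem i)
      (fun i _ j _ hij => hYindep.indepFun hij)]
    calc ∑ i : Fin G, variance (Y i) P ≤ ∑ _i : Fin G, C ^ 2 :=
          Finset.sum_le_sum (fun i _ => hvar i)
      _ = G * C ^ 2 := by simp [Finset.sum_const, mul_comm]
  have hES : ∫ ω, S ω ∂P = G * m := by
    rw [hS]
    simp only [Finset.sum_apply]
    rw [integral_finset_sum _ (fun i _ => (hYmem i).integrable one_le_two)]
    simp [hEY]
  have hsub : {ω | a ≤ |(1 / (G : ℝ)) * ∑ i, φ (τ i ω) - m|}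
      ⊆ {ω | (G : ℝ) * a ≤ |S ω - ∫ ω', S ω' ∂P|} := by
    intro ω hω
    simp only [Set.mem_setOf_eq] at hω ⊢
    rw [hES]
    have hGpos : (0 : ℝ) < G := Nat.cast_pos.mpr hG
    have hid : S ω - G * m = (G : ℝ) * ((1 / (G : ℝ)) * ∑ i, φ (τ i ω) - m) := by
      field_simp [hS, hY]
      simp [hS, hY, Finset.sum_apply]
    rw [hid, abs_mul, abs_of_pos hGpos]
    exact mul_le_mul_of_nonneg_left hω hGpos.le
  refine (measure_mono hsub).trans ?_
  have hca : (0 : ℝ) < (G : ℝ) * a := by positivity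
  refine (meas_ge_le_variance_div_sq hSmem hca).trans ?_
  refine ENNReal.ofReal_le_ofReal ?_
  have hGpos : (0 : ℝ) < G := Nat.cast_pos.mpr hG
  rw [mul_pow]
  calc variance S P / ((G : ℝ) ^ 2 * a ^ 2) ≤ (G * C ^ 2) / ((G : ℝ) ^ 2 * a ^ 2) := by
        gcongr
      _ = C ^ 2 / (G * a ^ 2) := by field_simp

lemma ae_abs_le_of_full (μ : Measure ℝ) [IsProbabilityMeasure μ] (R : ℝ)
    (h : μ {x : ℝ | |x| ≤ R} = 1) : ∀ᵐ x ∂μ, |x| ≤ R := by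
  have hS : MeasurableSet {x : ℝ | |x| ≤ R} :=
    measurableSet_le (measurable_id.abs) measurable_const
  rw [ae_iff]
  have : {x : ℝ | ¬ |x| ≤ R} = {x : ℝ | |x| ≤ R}ᶜ := by ext x; simp
  rw [this, measure_compl hS (measure_ne_top _ _), h]
  simp


set_option maxHeartbeats 1000000 in
/-- Consistency of the rollout standard deviation: let `M > 0` and let `ρ` be a probability
measure on `ℝ` with `ρ {x : |x| ≤ √M} = 1`.  For every `δ > 0` and `η > 0` there exist
`ε₀ > 0` and `G₀ ∈ ℕ` such that for every probability measure `π` on `ℝ` supported in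
`{x : |x| ≤ √M}` with `KL(π‖ρ) ≤ ε₀` and every `G ≥ G₀`: if `τ₁, …, τ_G` are independent
random variables each with law `π`, then the probability that
`|σ̂_G − Std(ρ)| > δ` is less than `η`, where `σ̂_G = √((1/G)·∑ᵢ (τᵢ − τ̄_G)²)` and
`τ̄_G = (1/G)·∑ᵢ τᵢ`. -/
theorem rollout_std_consistent (M : ℝ) (hM : 0 < M)
    (ρ : Measure ℝ) [IsProbabilityMeasure ρ]
    (hρ : ρ {x : ℝ | |x| ≤ Real.sqrt M} = 1) :
    ∀ δ > (0 : ℝ), ∀ η > (0 : ℝ), ∃ ε₀ > (0 : ℝ), ∃ G₀ : ℕ,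
      ∀ π : Measure ℝ, IsProbabilityMeasure π →
        π {x : ℝ | |x| ≤ Real.sqrt M} = 1 →
        klDiv π ρ ≤ (ε₀ : EReal) →
        ∀ G : ℕ, G₀ ≤ G →
          ∀ (Ω : Type) (_ : MeasurableSpace Ω) (P : Measure Ω),
            IsProbabilityMeasure P →
            ∀ τ : Fin G → Ω → ℝ,
              (∀ i, Measurable (τ i)) →
              iIndepFun τ P →
              (∀ i, Measure.map (τ i) P = π) →
              P {ω |
                  |Real.sqrt ((1 / (G : ℝ)) *
                      ∑ i, (τ i ω - (1 / (G : ℝ)) * ∑ j, τ j ω) ^ 2) -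
                    stdM ρ| > δ}
                < ENNReal.ofReal η := by
  intro δ hδ η hη
  set R := Real.sqrt M with hRdef
  have hR : 0 < R := Real.sqrt_pos.mpr hM
  have hR2 : R ^ 2 = M := Real.sq_sqrt hM.le
  set B := R + M with hBdef
  have hB0 : 0 < B := by positivity
  have hRB : R ≤ B := by linarith
  have hMB : M ≤ B := by linarith
  set θ := δ ^ 2 / (4 * (1 + 2 * R)) with hθdef
  have hθ : 0 < θ := by positivity
  set t := min (1 / B) (θ / (2 * B ^ 2)) with htdef
  have ht : 0 < t := lt_min (by positivity) (by positivity)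
  have htB : t * B ≤ 1 := by
    have : t ≤ 1 / B := min_le_left _ _
    calc t * B ≤ (1 / B) * B := by nlinarith
      _ = 1 := by field_simp
  have htB2 : t * B ^ 2 ≤ θ / 2 := by
    have h1 : t ≤ θ / (2 * B ^ 2) := min_le_right _ _
    calc t * B ^ 2 ≤ (θ / (2 * B ^ 2)) * B ^ 2 := by nlinarith
      _ = θ / 2 := by field_simp
  refine ⟨t * θ / 2, by positivity, ⌈(4 * B ^ 2) / (θ ^ 2 * η)⌉₊ + 1, ?_⟩
  intro π hπprob hπ hKL G hG Ω mΩ P hPprob τ hmeas hindep hlaw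
  have hρae : ∀ᵐ x ∂ρ, |x| ≤ R := ae_abs_le_of_full ρ R hρ
  have hπae : ∀ᵐ x ∂π, |x| ≤ R := ae_abs_le_of_full π R hπ
  -- extract KL data
  by_cases hcond : π ≪ ρ ∧ Integrable (fun x => Real.log ((π.rnDeriv ρ x)).toReal) π
  swap
  · rw [klDiv, if_neg hcond] at hKL
    exact absurd hKL (not_le.mpr (EReal.coe_lt_top _))
  obtain ⟨hac, hint⟩ := hcond
  rw [klDiv, if_pos ⟨hac, hint⟩, EReal.coe_le_coe_iff] at hKL
  set K := ∫ x, Real.log ((π.rnDeriv ρ x)).toReal ∂π with hKdef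
  -- moment closeness
  have hbound1 : ∀ᵐ x ∂ρ, |(fun x : ℝ => x) x| ≤ B := by
    filter_upwards [hρae] with x hx; simpa using hx.trans hRB
  have hbound2 : ∀ᵐ x ∂ρ, |(fun x : ℝ => x ^ 2) x| ≤ B := by
    filter_upwards [hρae] with x hx
    show |x ^ 2| ≤ B
    rw [abs_pow]
    calc |x| ^ 2 ≤ R ^ 2 := by nlinarith [abs_nonneg x]
      _ ≤ B := by rw [hR2]; exact hMB
  have hKθ : K / t + t * B ^ 2 ≤ θ := by
    have h1 : K / t ≤ (t * θ / 2) / t := by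
      apply div_le_div_of_nonneg_right hKL ht.le
    have h2 : (t * θ / 2) / t = θ / 2 := by field_simp
    linarith
  have hm1 : |∫ x, x ∂π - ∫ x, x ∂ρ| ≤ θ :=
    (moment_bound_abs π ρ hac hint (fun x => x) measurable_id B hB0 hbound1 t ht htB).trans hKθ
  have hm2 : |∫ x, x ^ 2 ∂π - ∫ x, x ^ 2 ∂ρ| ≤ θ :=
    (moment_bound_abs π ρ hac hint (fun x => x ^ 2) (measurable_id.pow_const 2) B hB0
      hbound2 t ht htB).trans hKθ
  -- positivity of G
  have hG1 : 1 ≤ G := le_trans (Nat.le_add_left 1 _) hG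
  have hGpos : 0 < G := hG1
  have hGR : (0 : ℝ) < G := Nat.cast_pos.mpr hGpos
  -- Chebyshev events
  have hπb1 : ∀ᵐ x ∂π, |(fun x : ℝ => x) x| ≤ B := by
    filter_upwards [hπae] with x hx; simpa using hx.trans hRB
  have hπb2 : ∀ᵐ x ∂π, |(fun x : ℝ => x ^ 2) x| ≤ B := by
    filter_upwards [hπae] with x hx
    show |x ^ 2| ≤ B
    rw [abs_pow]
    calc |x| ^ 2 ≤ R ^ 2 := by nlinarith [abs_nonneg x]
      _ ≤ B := by rw [hR2]; exact hMB
  have hE1 := empirical_cheb P hGpos τ hmeas hindep π hlaw (fun x => x) measurable_id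
    B hB0.le hπb1 θ hθ
  have hE2 := empirical_cheb P hGpos τ hmeas hindep π hlaw (fun x => x ^ 2)
    (measurable_id.pow_const 2) B hB0.le hπb2 θ hθ
  -- the bad null set
  set N : Set Ω := ⋃ i, {ω | R < |τ i ω|} with hNdef
  have hN : P N = 0 := by
    rw [hNdef]
    refine measure_iUnion_null fun i => ?_
    have hU : MeasurableSet {x : ℝ | R < |x|} :=
      measurableSet_lt measurable_const (measurable_id.abs)
    have : {ω | R < |τ i ω|} = τ i ⁻¹' {x | R < |x|} := rfl
    rw [this, ← Measure.map_apply (hmeas i) hU, hlaw i]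
    have hcompl : {x : ℝ | R < |x|} = {x : ℝ | |x| ≤ R}ᶜ := by ext x; simp [not_le]
    have hSm : MeasurableSet {x : ℝ | |x| ≤ R} :=
      measurableSet_le (measurable_id.abs) measurable_const
    rw [hcompl, measure_compl hSm (measure_ne_top _ _), hπ]
    simp
  -- event containment
  set E1 : Set Ω := {ω | θ ≤ |(1 / (G : ℝ)) * ∑ i, τ i ω - ∫ x, x ∂π|} with hE1def
  set E2 : Set Ω := {ω | θ ≤ |(1 / (G : ℝ)) * ∑ i, (τ i ω) ^ 2 - ∫ x, x ^ 2 ∂π|} with hE2def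
  have hm1ρ : |∫ x, x ∂ρ| ≤ R := by
    have := norm_integral_le_of_norm_le_const (f := fun x : ℝ => x) (C := R) (μ := ρ)
      (by filter_upwards [hρae] with x hx; simpa using hx)
    simpa [measure_univ] using this
  have hsubset : {ω |
      |Real.sqrt ((1 / (G : ℝ)) * ∑ i, (τ i ω - (1 / (G : ℝ)) * ∑ j, τ j ω) ^ 2) -
        stdM ρ| > δ} ⊆ E1 ∪ E2 ∪ N := by
    intro ω hω
    by_contra hcon
    simp only [Set.mem_union, not_or] at hcon
    obtain ⟨⟨hω1, hω2⟩, hωN⟩ := hcon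
    have hτb : ∀ i, |τ i ω| ≤ R := by
      intro i
      by_contra hb
      exact hωN (Set.mem_iUnion.mpr ⟨i, lt_of_not_ge hb⟩)
    rw [hE1def, Set.mem_setOf_eq, not_le] at hω1
    rw [hE2def, Set.mem_setOf_eq, not_le] at hω2
    set A1 := (1 / (G : ℝ)) * ∑ j, τ j ω with hA1def
    set A2 := (1 / (G : ℝ)) * ∑ j, (τ j ω) ^ 2 with hA2def
    -- identity
    have hsumid : ∑ i, (τ i ω - A1) ^ 2 = (∑ i, (τ i ω) ^ 2) - (G : ℝ) * A1 ^ 2 := by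
      have hsum1 : ∑ j, τ j ω = (G : ℝ) * A1 := by
        rw [hA1def]; field_simp
      have : ∀ i : Fin G, (τ i ω - A1) ^ 2
          = (τ i ω) ^ 2 - 2 * A1 * τ i ω + A1 ^ 2 := fun i => by ring
      rw [Finset.sum_congr rfl (fun i _ => this i), Finset.sum_add_distrib,
        Finset.sum_sub_distrib, ← Finset.mul_sum, hsum1, Finset.sum_const,
        Finset.card_univ, Fintype.card_fin, nsmul_eq_mul]
      ring
    have hQ : (1 / (G : ℝ)) * ∑ i, (τ i ω - A1) ^ 2 = A2 - A1 ^ 2 := by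
      rw [hsumid, mul_sub, hA2def]
      congr 1
      field_simp
    -- bounds
    have hA1b : |A1| ≤ R := by
      rw [hA1def, abs_mul, abs_of_pos (by positivity : (0:ℝ) < 1 / (G:ℝ))]
      calc (1 / (G : ℝ)) * |∑ j, τ j ω| ≤ (1 / (G : ℝ)) * ∑ j, |τ j ω| := by
            gcongr
            exact Finset.abs_sum_le_sum_abs _ _
        _ ≤ (1 / (G : ℝ)) * ∑ _j : Fin G, R := by
            gcongr with j
            exact hτb j
        _ = R := by
            rw [Finset.sum_const, Finset.card_univ, Fintype.card_fin, nsmul_eq_mul]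
            field_simp
    -- combine
    set m1π := ∫ x, x ∂π
    set m1ρ := ∫ x, x ∂ρ
    set m2ρ := ∫ x, x ^ 2 ∂ρ
    have hA1close : |A1 - m1ρ| ≤ 2 * θ := by
      calc |A1 - m1ρ| ≤ |A1 - m1π| + |m1π - m1ρ| := abs_sub_le _ _ _
        _ ≤ θ + θ := add_le_add hω1.le hm1
        _ = 2 * θ := by ring
    have hA2close : |A2 - m2ρ| ≤ 2 * θ := by
      calc |A2 - m2ρ| ≤ |A2 - ∫ x, x ^ 2 ∂π| + |(∫ x, x ^ 2 ∂π) - m2ρ| := abs_sub_le _ _ _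
        _ ≤ θ + θ := add_le_add hω2.le hm2
        _ = 2 * θ := by ring
    have hsq : |A1 ^ 2 - m1ρ ^ 2| ≤ 2 * R * (2 * θ) := by
      have : A1 ^ 2 - m1ρ ^ 2 = (A1 - m1ρ) * (A1 + m1ρ) := by ring
      rw [this, abs_mul]
      have h2 : |A1 + m1ρ| ≤ 2 * R := by
        calc |A1 + m1ρ| ≤ |A1| + |m1ρ| := abs_add_le _ _
          _ ≤ R + R := add_le_add hA1b hm1ρ
          _ = 2 * R := by ring
      calc |A1 - m1ρ| * |A1 + m1ρ| ≤ (2 * θ) * (2 * R) :=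
            mul_le_mul hA1close h2 (abs_nonneg _) (by positivity)
        _ = 2 * R * (2 * θ) := by ring
    have hfinal : |(A2 - A1 ^ 2) - (m2ρ - m1ρ ^ 2)| ≤ δ ^ 2 / 2 := by
      have : (A2 - A1 ^ 2) - (m2ρ - m1ρ ^ 2) = (A2 - m2ρ) - (A1 ^ 2 - m1ρ ^ 2) := by ring
      rw [this]
      calc |(A2 - m2ρ) - (A1 ^ 2 - m1ρ ^ 2)| ≤ |A2 - m2ρ| + |A1 ^ 2 - m1ρ ^ 2| :=
            abs_sub _ _
        _ ≤ 2 * θ + 2 * R * (2 * θ) := add_le_add hA2close hsq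
        _ = 2 * θ * (1 + 2 * R) := by ring
        _ = δ ^ 2 / 2 := by rw [hθdef]; field_simp; ring
    -- conclude
    rw [Set.mem_setOf_eq] at hω
    apply absurd hω
    push_neg
    rw [hQ]
    have hstd : stdM ρ = Real.sqrt (m2ρ - m1ρ ^ 2) := rfl
    rw [hstd]
    calc |Real.sqrt (A2 - A1 ^ 2) - Real.sqrt (m2ρ - m1ρ ^ 2)|
        ≤ Real.sqrt |(A2 - A1 ^ 2) - (m2ρ - m1ρ ^ 2)| := sqrt_dist _ _
      _ ≤ Real.sqrt (δ ^ 2 / 2) := Real.sqrt_le_sqrt hfinal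
      _ ≤ Real.sqrt (δ ^ 2) := Real.sqrt_le_sqrt (by linarith [sq_nonneg δ])
      _ = δ := Real.sqrt_sq hδ.le
  -- probability bound
  have hGbig : B ^ 2 / (G * θ ^ 2) ≤ η / 4 := by
    have hx : (4 * B ^ 2) / (θ ^ 2 * η) ≤ (G : ℝ) := by
      calc (4 * B ^ 2) / (θ ^ 2 * η) ≤ (⌈(4 * B ^ 2) / (θ ^ 2 * η)⌉₊ : ℝ) :=
            Nat.le_ceil _
        _ ≤ (G : ℝ) := by
            have : (⌈(4 * B ^ 2) / (θ ^ 2 * η)⌉₊ : ℕ) ≤ G := le_trans (Nat.le_succ _) hG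
            exact_mod_cast this
    rw [div_le_div_iff₀ (by positivity) (by norm_num : (0:ℝ) < 4)]
    rw [div_le_iff₀ (by positivity)] at hx
    nlinarith [sq_nonneg θ, sq_nonneg B]
  have hEb : ENNReal.ofReal (B ^ 2 / (G * θ ^ 2)) ≤ ENNReal.ofReal (η / 4) :=
    ENNReal.ofReal_le_ofReal hGbig
  calc P {ω | |Real.sqrt ((1 / (G : ℝ)) * ∑ i, (τ i ω - (1 / (G : ℝ)) * ∑ j, τ j ω) ^ 2)
          - stdM ρ| > δ}
      ≤ P (E1 ∪ E2 ∪ N) := measure_mono hsubset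
    _ ≤ P (E1 ∪ E2) + P N := measure_union_le _ _
    _ ≤ (P E1 + P E2) + P N := by gcongr; exact measure_union_le _ _
    _ = P E1 + P E2 := by rw [hN, add_zero]
    _ ≤ ENNReal.ofReal (η / 4) + ENNReal.ofReal (η / 4) := by
        refine add_le_add (le_trans ?_ hEb) (le_trans ?_ hEb)
        · exact hE1
        · exact hE2
    _ = ENNReal.ofReal (η / 2) := by
        rw [← ENNReal.ofReal_add (by positivity) (by positivity)]
        congr 1
        ring
    _ < ENNReal.ofReal η := by
        rw [ENNReal.ofReal_lt_ofReal_iff hη]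
        linarith
end

section
/- Let M > 0 and let π and ρ be probability measures on ℝ, each giving full mass to the set {x : |x| ≤ √M}, and suppose ε = KL(π‖ρ) < ∞. Then the variance gap satisfies |Var(π) − Var(ρ)| ≤ 4M·√ε. -/
open MeasureTheory
open scoped Classical

/-- Mean of a measure on `ℝ`. -/
noncomputable def meanM (μ : Measure ℝ) : ℝ := ∫ x, x ∂μ

/-- Variance of a measure on `ℝ`: `∫ x² dμ − (∫ x dμ)²`. -/
noncomputable def varM (μ : Measure ℝ) : ℝ := (∫ x, x ^ 2 ∂μ) - (∫ x, x ∂μ) ^ 2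

/-! Write `g = dπ/dρ`. The identity `klFun (y²) = (y - 1)² + 2 y klFun y` gives
`(√g - 1)² ≤ klFun g`, hence `|g - 1| = |√g - 1| (√g + 1) ≤ klFun g / t + t (g + 1) / 2` for every
`t > 0`; integrating against `ρ` and optimizing in `t` yields `∫ |g - 1| dρ ≤ 2 √ε`.
Since `π ≪ ρ`, both measures live on `[-√M, √M]`, where `(x - c)²` stays within `2M` of `2M`
whenever `|c| ≤ √M`; so the second moments of `π` and `ρ` about `c` differ by at most
`2M ∫ |g - 1| dρ ≤ 4M √ε`. As `Var μ = min_c ∫ (x - c)² dμ`, taking `c` to be either mean bounds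
the variance gap in both directions. -/

open InformationTheory (klFun klFun_nonneg integrable_klFun_rnDeriv_iff integral_klFun_rnDeriv)

lemma klFun_sq (y : ℝ) : klFun (y ^ 2) = (y - 1) ^ 2 + 2 * y * klFun y := by
  simp only [klFun, Real.log_pow]
  push_cast
  ring

lemma sq_sqrt_sub_one_le_klFun {x : ℝ} (hx : 0 ≤ x) : (√x - 1) ^ 2 ≤ klFun x := by
  have := klFun_sq √x
  rw [Real.sq_sqrt hx] at this
  nlinarith [klFun_nonneg (Real.sqrt_nonneg x), Real.sqrt_nonneg x]

lemma abs_sub_one_le_klFun_div_add {x t : ℝ} (hx : 0 ≤ x) (ht : 0 < t) :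
    |x - 1| ≤ klFun x / t + t * (x + 1) / 2 := by
  set a := |√x - 1|
  set b := √x + 1
  have hab : |x - 1| = a * b := by
    rw [← abs_of_nonneg (by positivity : 0 ≤ b), ← abs_mul]
    congr 1
    nlinarith [Real.sq_sqrt hx]
  have ha : a ^ 2 ≤ klFun x := by simpa only [a, sq_abs] using sq_sqrt_sub_one_le_klFun hx
  have hb : b ^ 2 ≤ 2 * (x + 1) := by nlinarith [Real.sq_sqrt hx, sq_nonneg (√x - 1)]
  have amgm : t * (a * b) ≤ a ^ 2 + t ^ 2 * b ^ 2 / 4 := by nlinarith [sq_nonneg (2 * a - t * b)]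
  rw [hab, div_add' _ _ _ ht.ne', le_div_iff₀ ht]
  nlinarith

lemma le_two_mul_sqrt_of_forall_le_div_add {a ε : ℝ} (hε : 0 ≤ ε)
    (h : ∀ t > 0, a ≤ ε / t + t) : a ≤ 2 * √ε := by
  rcases hε.eq_or_lt with rfl | hε
  · simpa using le_of_forall_pos_le_add fun t ht => by simpa using h t ht
  · simpa [Real.div_sqrt, two_mul] using h √ε (Real.sqrt_pos.2 hε)

section RnDeriv

variable {α : Type*} [MeasurableSpace α] {μ ν : Measure α}

lemma integral_sub_integral_eq_integral_rnDeriv_sub_one_mul [SigmaFinite μ]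
    [μ.HaveLebesgueDecomposition ν] (hμν : μ ≪ ν) {f : α → ℝ} (hfμ : Integrable f μ)
    (hfν : Integrable f ν) :
    ∫ x, f x ∂μ - ∫ x, f x ∂ν = ∫ x, ((μ.rnDeriv ν x).toReal - 1) * f x ∂ν := by
  have hgf : Integrable (fun x => (μ.rnDeriv ν x).toReal * f x) ν :=
    (integrable_rnDeriv_smul_iff hμν).2 hfμ
  simp_rw [sub_one_mul]
  rw [integral_sub hgf hfν, ← integral_rnDeriv_smul hμν]
  rfl

lemma abs_integral_sub_integral_le [IsProbabilityMeasure μ] [IsProbabilityMeasure ν]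
    (hμν : μ ≪ ν) {f : α → ℝ} (hf : AEStronglyMeasurable f ν) {c K : ℝ}
    (hfK : ∀ᵐ x ∂ν, |f x - c| ≤ K) :
    |∫ x, f x ∂μ - ∫ x, f x ∂ν| ≤ K * ∫ x, |(μ.rnDeriv ν x).toReal - 1| ∂ν := by
  have hFν : Integrable (fun x => f x - c) ν := Integrable.of_bound (by fun_prop) K hfK
  have hFμ : Integrable (fun x => f x - c) μ :=
    Integrable.of_bound ((hf.mono_ac hμν).sub aestronglyMeasurable_const) K (hμν.ae_le hfK)
  have hfμ : Integrable f μ :=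
    (integrable_add_const_iff (c := -c)).1 (by simpa only [sub_eq_add_neg] using hFμ)
  have hfν : Integrable f ν :=
    (integrable_add_const_iff (c := -c)).1 (by simpa only [sub_eq_add_neg] using hFν)
  have hshift : ∫ x, f x ∂μ - ∫ x, f x ∂ν = ∫ x, f x - c ∂μ - ∫ x, f x - c ∂ν := by
    rw [integral_sub hfμ (integrable_const c), integral_sub hfν (integrable_const c)]
    simp
  have hbound : ∀ᵐ x ∂ν, ‖((μ.rnDeriv ν x).toReal - 1) * (f x - c)‖
      ≤ K * |(μ.rnDeriv ν x).toReal - 1| := by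
    filter_upwards [hfK] with x hx
    rw [Real.norm_eq_abs, abs_mul, mul_comm K]
    exact mul_le_mul_of_nonneg_left hx (abs_nonneg _)
  rw [hshift, integral_sub_integral_eq_integral_rnDeriv_sub_one_mul hμν hFμ hFν,
    ← integral_const_mul, ← Real.norm_eq_abs]
  exact norm_integral_le_of_norm_le
    ((Measure.integrable_toReal_rnDeriv.sub (integrable_const 1)).abs.const_mul K) hbound

lemma integral_abs_rnDeriv_sub_one_le [IsProbabilityMeasure μ] [IsProbabilityMeasure ν]
    (hμν : μ ≪ ν) (h_int : Integrable (llr μ ν) μ) :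
    ∫ x, |(μ.rnDeriv ν x).toReal - 1| ∂ν ≤ 2 * √(∫ x, llr μ ν x ∂μ) := by
  set g : α → ℝ := fun x => (μ.rnDeriv ν x).toReal
  have hg : Integrable g ν := Measure.integrable_toReal_rnDeriv
  have hg_one : ∫ x, g x ∂ν = 1 := by simp [g, Measure.integral_toReal_rnDeriv hμν]
  have hkl : Integrable (fun x => klFun (g x)) ν := (integrable_klFun_rnDeriv_iff hμν).2 h_int
  have hkl_eq : ∫ x, klFun (g x) ∂ν = ∫ x, llr μ ν x ∂μ := by
    simp [g, integral_klFun_rnDeriv hμν h_int]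
  refine le_two_mul_sqrt_of_forall_le_div_add
    (hkl_eq ▸ integral_nonneg fun x => klFun_nonneg ENNReal.toReal_nonneg) fun t ht => ?_
  have hkl_t : Integrable (fun x => klFun (g x) / t) ν := hkl.div_const t
  have hg_t : Integrable (fun x => t * (g x + 1) / 2) ν :=
    ((hg.add (integrable_const 1)).const_mul t).div_const 2
  calc ∫ x, |g x - 1| ∂ν ≤ ∫ x, klFun (g x) / t + t * (g x + 1) / 2 ∂ν :=
        integral_mono (hg.sub (integrable_const 1)).abs (hkl_t.add hg_t)
          fun x => abs_sub_one_le_klFun_div_add ENNReal.toReal_nonneg ht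
    _ = (∫ x, llr μ ν x ∂μ) / t + t := by
        rw [integral_add hkl_t hg_t, integral_div, integral_div, integral_const_mul,
          integral_add hg (integrable_const 1), hkl_eq, hg_one]
        simp
        ring

end RnDeriv

lemma klDiv_eq_coe_iff {Ω : Type*} [MeasurableSpace Ω] {μ ν : Measure Ω} {ε : ℝ} :
    klDiv μ ν = ε ↔ μ ≪ ν ∧ Integrable (llr μ ν) μ ∧ ∫ x, llr μ ν x ∂μ = ε := by
  unfold klDiv
  split_ifs with h
  · exact ⟨fun hε => ⟨h.1, h.2, EReal.coe_injective hε⟩, fun hε => congrArg _ hε.2.2⟩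
  · exact ⟨fun hε => absurd hε.symm (EReal.coe_ne_top ε), fun hε => absurd ⟨hε.1, hε.2.1⟩ h⟩

section Moments

variable {μ ν : Measure ℝ} [IsProbabilityMeasure μ] [IsProbabilityMeasure ν]

lemma abs_meanM_le {s : ℝ} (h : ∀ᵐ x ∂μ, |x| ≤ s) : |meanM μ| ≤ s := by
  simpa [meanM] using norm_integral_le_of_norm_le_const (μ := μ) (f := fun x : ℝ => x) h

lemma integral_sub_sq_eq_varM_add (hμ : MemLp id 2 μ) (c : ℝ) :
    ∫ x, (x - c) ^ 2 ∂μ = varM μ + (meanM μ - c) ^ 2 := by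
  have h1 : Integrable (fun x : ℝ => 2 * x * c) μ :=
    ((hμ.integrable one_le_two).const_mul 2).mul_const c
  have h2 : Integrable (fun x : ℝ => x ^ 2) μ := hμ.integrable_sq
  have h21 : Integrable (fun x : ℝ => x ^ 2 - 2 * x * c) μ := h2.sub h1
  simp_rw [sub_sq]
  rw [integral_add h21 (integrable_const _), integral_sub h2 h1, integral_mul_const,
    integral_const_mul, integral_const]
  simp only [varM, meanM, probReal_univ, smul_eq_mul, one_mul]
  ring

lemma varM_sub_varM_le (hμ : MemLp id 2 μ) (hν : MemLp id 2 ν) :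
    varM μ - varM ν ≤ ∫ x, (x - meanM ν) ^ 2 ∂μ - ∫ x, (x - meanM ν) ^ 2 ∂ν := by
  rw [integral_sub_sq_eq_varM_add hμ, integral_sub_sq_eq_varM_add hν, sub_self]
  nlinarith [sq_nonneg (meanM μ - meanM ν)]

end Moments

lemma abs_sub_sq_sub_le {x c s : ℝ} (hx : |x| ≤ s) (hc : |c| ≤ s) :
    |(x - c) ^ 2 - 2 * s ^ 2| ≤ 2 * s ^ 2 := by
  have : |x - c| ≤ 2 * s := (abs_sub x c).trans (by linarith)
  rw [abs_le]
  constructor <;> nlinarith [sq_abs (x - c), abs_nonneg (x - c)]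

theorem var_gap_le_of_klDiv_eq_general (M : ℝ) (hM : 0 < M) (π ρ : Measure ℝ)
    [IsProbabilityMeasure π] [IsProbabilityMeasure ρ]
    (hρ : ρ {x : ℝ | |x| ≤ Real.sqrt M} = 1)
    (ε : ℝ) (hε : klDiv π ρ = (ε : EReal)) :
    |varM π - varM ρ| ≤ 4 * M * Real.sqrt ε := by
  obtain ⟨hπρ, hllr, rfl⟩ := klDiv_eq_coe_iff.1 hε
  have hρS : ∀ᵐ x ∂ρ, |x| ≤ √M :=
    (mem_ae_iff_prob_eq_one (measurableSet_le (by fun_prop) (by fun_prop))).2 hρ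
  have hπS : ∀ᵐ x ∂π, |x| ≤ √M := hπρ.ae_le hρS
  have hsq (c : ℝ) (hc : |c| ≤ √M) :
      |∫ x, (x - c) ^ 2 ∂π - ∫ x, (x - c) ^ 2 ∂ρ| ≤ 4 * M * √(∫ x, llr π ρ x ∂π) :=
    calc _ ≤ 2 * √M ^ 2 * ∫ x, |(π.rnDeriv ρ x).toReal - 1| ∂ρ :=
          abs_integral_sub_integral_le hπρ (by fun_prop)
            (hρS.mono fun x hx => abs_sub_sq_sub_le hx hc)
      _ ≤ 2 * √M ^ 2 * (2 * √(∫ x, llr π ρ x ∂π)) := by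
          gcongr
          exact integral_abs_rnDeriv_sub_one_le hπρ hllr
      _ = 4 * M * √(∫ x, llr π ρ x ∂π) := by rw [Real.sq_sqrt hM.le]; ring
  have hπ2 : MemLp id 2 π := MemLp.of_bound aestronglyMeasurable_id _ hπS
  have hρ2 : MemLp id 2 ρ := MemLp.of_bound aestronglyMeasurable_id _ hρS
  rw [abs_sub_le_iff]
  exact ⟨(varM_sub_varM_le hπ2 hρ2).trans ((le_abs_self _).trans (hsq _ (abs_meanM_le hρS))),
    (varM_sub_varM_le hρ2 hπ2).trans
      ((le_abs_self _).trans ((abs_sub_comm _ _).trans_le (hsq _ (abs_meanM_le hπS))))⟩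

/-- If `π` and `ρ` are probability measures on `ℝ` supported in `{x : |x| ≤ √M}` with
`KL(π‖ρ) = ε < ∞`, then `|Var(π) − Var(ρ)| ≤ 4M√ε`. -/
theorem var_gap_le_of_klDiv_eq (M : ℝ) (hM : 0 < M) (π ρ : Measure ℝ)
    [IsProbabilityMeasure π] [IsProbabilityMeasure ρ]
    (hπ : π {x : ℝ | |x| ≤ Real.sqrt M} = 1)
    (hρ : ρ {x : ℝ | |x| ≤ Real.sqrt M} = 1)
    (ε : ℝ) (hε : klDiv π ρ = (ε : EReal)) :
    |varM π - varM ρ| ≤ 4 * M * Real.sqrt ε :=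
  var_gap_le_of_klDiv_eq_general M hM π ρ hρ ε hε
end
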